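/- Let S₁ ⊆ S₂ be two multiplicative closed subsets of a commutative multiplicative hyperring G such that for every t ∈ S₂ there exists s ∈ S₁ with (t∘s) ∩ S₁ ≠ ∅, and let A be a C-hyperideal of G with A ∩ S₂ = ∅. Then A is a quasi S₁-primary hyperideal of G if and only if A is a quasi S₂-primary hyperideal of G. -/

import Mathlib

open Set

/-- A commutative multiplicative hyperring: a commutative additive group with a
commutative, associative hyperoperation `hmul` satisfying `(-a)∘b = -(a∘b)`,
weak distributivity, and having an identity element `e` with `a ∈ e∘a`. -/
class MulHyperring (G : Type*) extends AddCommGroup G where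
  hmul : G → G → Set G
  hmul_nonempty : ∀ a b : G, (hmul a b).Nonempty
  hmul_comm : ∀ a b : G, hmul a b = hmul b a
  hmul_assoc : ∀ a b c : G, (⋃ x ∈ hmul a b, hmul x c) = ⋃ x ∈ hmul b c, hmul a x
  neg_hmul : ∀ a b : G, hmul (-a) b = (fun x => -x) '' (hmul a b)
  hmul_add : ∀ a b c : G,
    hmul a (b + c) ⊆ {x | ∃ u ∈ hmul a b, ∃ v ∈ hmul a c, x = u + v}
  e : G
  e_mem : ∀ a : G, a ∈ hmul e a

namespace MulHyperring

variable {G : Type*} [MulHyperring G]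

/-- Hyperproduct of an element with a set: `a ∘ B = ⋃ b ∈ B, a ∘ b`. -/
def smulSet (a : G) (B : Set G) : Set G := ⋃ b ∈ B, hmul a b

/-- Hyperproduct of two sets. -/
def setMul (A B : Set G) : Set G := ⋃ a ∈ A, ⋃ b ∈ B, hmul a b

/-- Hyperproduct `a₁ ∘ a₂ ∘ ⋯ ∘ aₙ` of a (nonempty) list of elements. -/
def hProd : List G → Set G
  | [] => ∅
  | [a] => {a}
  | a :: b :: l => smulSet a (hProd (b :: l))

/-- `aⁿ` as a hyperproduct. -/
def hPow (a : G) (n : ℕ) : Set G := hProd (List.replicate n a)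

/-- `A` is a hyperideal of `G`. -/
def IsHyperideal (A : Set G) : Prop :=
  A.Nonempty ∧ (∀ x ∈ A, ∀ y ∈ A, x - y ∈ A) ∧ ∀ r : G, ∀ x ∈ A, hmul r x ⊆ A

/-- `A` is a `C`-hyperideal: any finite hyperproduct meeting `A` is contained in `A`. -/
def IsCHyperideal (A : Set G) : Prop :=
  IsHyperideal A ∧ ∀ l : List G, l ≠ [] → (hProd l ∩ A).Nonempty → hProd l ⊆ A

/-- The radical of a (C-)hyperideal: `{a | aⁿ ⊆ A for some n ≥ 1}`. -/
def rad (A : Set G) : Set G := {a | ∃ n : ℕ, 1 ≤ n ∧ hPow a n ⊆ A}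

/-- The hyperideal generated by a set. -/
def idealGen (X : Set G) : Set G := ⋂₀ {A | IsHyperideal A ∧ X ⊆ A}

/-- The hyperideal product of two hyperideals. -/
def idealMul (A B : Set G) : Set G := idealGen (setMul A B)

/-- Multiplicative closed subset. -/
def IsMCS (S : Set G) : Prop :=
  e ∈ S ∧ ∀ s₁ ∈ S, ∀ s₂ ∈ S, (hmul s₁ s₂ ∩ S).Nonempty

/-- Prime hyperideal. -/
def IsPrime (P : Set G) : Prop :=
  IsHyperideal P ∧ P ≠ univ ∧ ∀ x y : G, hmul x y ⊆ P → x ∈ P ∨ y ∈ P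

/-- `S`-prime hyperideal. -/
def IsSPrime (S A : Set G) : Prop :=
  IsHyperideal A ∧ A ∩ S = ∅ ∧
    ∃ t ∈ S, ∀ u v : G, hmul u v ⊆ A → hmul t u ⊆ A ∨ hmul t v ⊆ A

/-- `S`-primary hyperideal. -/
def IsSPrimary (S A : Set G) : Prop :=
  IsHyperideal A ∧ A ∩ S = ∅ ∧
    ∃ t ∈ S, ∀ u v : G, hmul u v ⊆ A → hmul t u ⊆ A ∨ hmul t v ⊆ rad A

/-- Quasi `S`-primary hyperideal. -/
def IsQuasiSPrimary (S A : Set G) : Prop :=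
  IsHyperideal A ∧ A ∩ S = ∅ ∧
    ∃ t ∈ S, ∀ u v : G, hmul u v ⊆ A → hmul t u ⊆ rad A ∨ hmul t v ⊆ rad A

/-- Weakly quasi `S`-primary hyperideal. -/
def IsWeaklyQuasiSPrimary (S A : Set G) : Prop :=
  IsHyperideal A ∧ A ∩ S = ∅ ∧
    ∃ t ∈ S, ∀ u v : G, 0 ∉ hmul u v → hmul u v ⊆ A →
      hmul t u ⊆ rad A ∨ hmul t v ⊆ rad A

/-- Strongly quasi `S`-primary hyperideal. -/
def IsStronglyQuasiSPrimary (S A : Set G) : Prop :=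
  IsHyperideal A ∧ A ∩ S = ∅ ∧
    ∃ t ∈ S, ∀ u v : G, hmul u v ⊆ A →
      smulSet t (hPow u 2) ⊆ A ∨ hmul t v ⊆ rad A

/-- The residual `(B : x) = {y | y ∘ x ⊆ B}`. -/
def colon (B : Set G) (x : G) : Set G := {y | hmul y x ⊆ B}

end MulHyperring

/-!
Shrinking `S₂` to `S₁` is the only nontrivial direction. If `t ∈ S₂` witnesses that `A` is quasi
`S₂`-primary, pick `s` with some `t' ∈ t ∘ s` lying in `S₁`. Since `rad A` absorbs hyperproducts
(`(r ∘ w)ⁿ ⊆ rⁿ ∘ wⁿ`), whenever `t ∘ u ⊆ rad A` also `t' ∘ u ⊆ (s ∘ t) ∘ u = s ∘ (t ∘ u) ⊆ rad A`,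
so `t'` witnesses that `A` is quasi `S₁`-primary.
-/

namespace MulHyperring

variable {G : Type*} [MulHyperring G]

theorem mem_smulSet {a x : G} {B : Set G} : x ∈ smulSet a B ↔ ∃ b ∈ B, x ∈ hmul a b := by
  simp [smulSet]

theorem mem_setMul {x : G} {A B : Set G} :
    x ∈ setMul A B ↔ ∃ a ∈ A, ∃ b ∈ B, x ∈ hmul a b := by
  simp [setMul]

theorem mem_hmul_assoc {a b c x y : G} (hx : x ∈ hmul a b) (hy : y ∈ hmul x c) :
    ∃ z ∈ hmul b c, y ∈ hmul a z := by
  have hy' : y ∈ ⋃ x ∈ hmul a b, hmul x c := mem_biUnion hx hy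
  rw [hmul_assoc] at hy'
  simpa using hy'

theorem mem_hmul_hmul_hmul_comm {s w a b z y x : G} (hz : z ∈ hmul s w) (hy : y ∈ hmul a b)
    (hx : x ∈ hmul z y) : ∃ p ∈ hmul s a, ∃ q ∈ hmul w b, x ∈ hmul p q := by
  obtain ⟨d, hd, hxd⟩ := mem_hmul_assoc hz hx
  rw [hmul_comm] at hd
  obtain ⟨q, hq, hdq⟩ := mem_hmul_assoc hy hd
  have hxd' : x ∈ ⋃ d ∈ hmul a q, hmul s d := mem_biUnion hdq hxd
  rw [← hmul_assoc] at hxd'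
  obtain ⟨p, hp, hxp⟩ := by simpa using hxd'
  exact ⟨p, hp, q, by rwa [hmul_comm], hxp⟩

theorem hPow_succ (a : G) {n : ℕ} (hn : 1 ≤ n) : hPow a (n + 1) = smulSet a (hPow a n) := by
  obtain ⟨m, rfl⟩ := Nat.exists_eq_add_of_le' hn
  rfl

theorem hPow_subset_setMul {s w z : G} (hz : z ∈ hmul s w) {n : ℕ} (hn : 1 ≤ n) :
    hPow z n ⊆ setMul (hPow s n) (hPow w n) := by
  induction n, hn using Nat.le_induction with
  | base =>
    rintro x rfl
    exact mem_setMul.2 ⟨s, rfl, w, rfl, hz⟩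
  | succ n hn ih =>
    intro x hx
    rw [hPow_succ _ hn, mem_smulSet] at hx
    obtain ⟨y, hy, hxy⟩ := hx
    obtain ⟨a, ha, b, hb, hyab⟩ := mem_setMul.1 (ih hy)
    obtain ⟨p, hp, q, hq, hxpq⟩ := mem_hmul_hmul_hmul_comm hz hyab hxy
    rw [hPow_succ _ hn, hPow_succ _ hn]
    exact mem_setMul.2 ⟨p, mem_smulSet.2 ⟨a, ha, hp⟩, q, mem_smulSet.2 ⟨b, hb, hq⟩, hxpq⟩

theorem hmul_subset_rad {A : Set G} (hA : IsHyperideal A) (r : G) {w : G} (hw : w ∈ rad A) :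
    hmul r w ⊆ rad A := by
  obtain ⟨n, hn, hwn⟩ := hw
  refine fun z hz => ⟨n, hn, fun x hx => ?_⟩
  obtain ⟨a, -, b, hb, hxab⟩ := mem_setMul.1 (hPow_subset_setMul hz hn hx)
  exact hA.2.2 a b (hwn hb) hxab

theorem hmul_subset_rad_of_mem_hmul {A : Set G} (hA : IsHyperideal A) {s t t' u : G}
    (ht' : t' ∈ hmul s t) (htu : hmul t u ⊆ rad A) : hmul t' u ⊆ rad A := by
  intro x hx
  obtain ⟨w, hw, hxw⟩ := mem_hmul_assoc ht' hx
  exact hmul_subset_rad hA s (htu hw) hxw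

theorem IsQuasiSPrimary.mono {S S' A : Set G} (h : IsQuasiSPrimary S A) (hSS' : S ⊆ S')
    (hAS' : A ∩ S' = ∅) : IsQuasiSPrimary S' A :=
  let ⟨hA, _, t, ht, hprime⟩ := h
  ⟨hA, hAS', t, hSS' ht, hprime⟩

theorem IsQuasiSPrimary.of_exists_hmul_inter {S S' A : Set G} (h : IsQuasiSPrimary S' A)
    (hS' : ∀ t ∈ S', ∃ s, (hmul t s ∩ S).Nonempty) (hAS : A ∩ S = ∅) :
    IsQuasiSPrimary S A := by
  obtain ⟨hA, -, t, ht, hprime⟩ := h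
  obtain ⟨s, t', hts, ht'S⟩ := hS' t ht
  rw [hmul_comm] at hts
  refine ⟨hA, hAS, t', ht'S, fun u v huv => ?_⟩
  exact (hprime u v huv).imp (hmul_subset_rad_of_mem_hmul hA hts)
    (hmul_subset_rad_of_mem_hmul hA hts)

end MulHyperring

open MulHyperring in
theorem quasiSPrimary_S1_iff_S2_general {G : Type*} [MulHyperring G] (S₁ S₂ A : Set G)
    (hsub : S₁ ⊆ S₂)
    (hcond : ∀ t ∈ S₂, ∃ s ∈ S₁, (hmul t s ∩ S₁).Nonempty)
    (hAS : A ∩ S₂ = ∅) :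
    IsQuasiSPrimary S₁ A ↔ IsQuasiSPrimary S₂ A := by
  have hAS₁ : A ∩ S₁ = ∅ := subset_empty_iff.1 (hAS ▸ inter_subset_inter_right A hsub)
  refine ⟨fun h => h.mono hsub hAS, fun h => h.of_exists_hmul_inter ?_ hAS₁⟩
  exact fun t ht => (hcond t ht).imp fun _ hs => hs.2

open MulHyperring in
theorem quasiSPrimary_S1_iff_S2 {G : Type*} [MulHyperring G] (S₁ S₂ A : Set G)
    (hS₁ : IsMCS S₁) (hS₂ : IsMCS S₂) (hsub : S₁ ⊆ S₂)
    (hcond : ∀ t ∈ S₂, ∃ s ∈ S₁, (hmul t s ∩ S₁).Nonempty)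
    (hA : IsCHyperideal A) (hAS : A ∩ S₂ = ∅) :
    IsQuasiSPrimary S₁ A ↔ IsQuasiSPrimary S₂ A :=
  quasiSPrimary_S1_iff_S2_general S₁ S₂ A hsub hcond hAS
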